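/- arXiv:1910.13792 — 4 statements merged into one kernel-verified Lean document; each statement's English description precedes it below -/
import Mathlib

section
/- Let A be a Hermitian positive definite n×n matrix and let V = I - A/‖A‖₂ (or more generally I - A/c with c ≥ ‖A‖₂ the spectral norm bound). Then for any α with 0 < α ≤ 1/c, the inequality ‖Vx‖²_A ≤ ‖x‖²_A - α‖x‖²_{A²} holds for all x ∈ ℂⁿ, i.e. V^H A V ≤ A - α A². -/
/-!
Since `A` is Hermitian and `V = 1 - c⁻¹ A`, one has the factorisation
`A - α A² - Vᴴ A V = A ((2c⁻¹ - α) I - c⁻² A) A`. The middle factor is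
`c⁻² (c I - A) + (c⁻¹ - α) I`, a nonnegative combination of positive semidefinite matrices,
and a congruence by the Hermitian `A` preserves positive semidefiniteness.
-/

open Matrix
open scoped ComplexOrder

namespace Matrix

variable {ι 𝕜 : Type*} [RCLike 𝕜]

theorem posSemidef_smul_one_sub_inv_sq_smul [DecidableEq ι] {A : Matrix ι ι 𝕜} {c α : ℝ}
    (hA : ((c : 𝕜) • 1 - A).PosSemidef) (hα : α ≤ c⁻¹) :
    ((2 * (c : 𝕜)⁻¹ - α) • 1 - (c : 𝕜)⁻¹ ^ 2 • A).PosSemidef := by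
  have hc : (c : 𝕜)⁻¹ ^ 2 * c = (c : 𝕜)⁻¹ := by
    rcases eq_or_ne c 0 with rfl | hc0
    · simp
    · field_simp [RCLike.ofReal_ne_zero.2 hc0]
  have hsplit : (2 * (c : 𝕜)⁻¹ - α) • 1 - (c : 𝕜)⁻¹ ^ 2 • A =
      (c⁻¹ ^ 2 : ℝ) • ((c : 𝕜) • 1 - A) + (c⁻¹ - α : ℝ) • (1 : Matrix ι ι 𝕜) := by
    simp only [← algebraMap_smul 𝕜 (_ : ℝ), RCLike.algebraMap_eq_ofReal]
    match_scalars
    · linear_combination -hc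
    · ring
  rw [hsplit]
  exact (hA.smul (sq_nonneg _)).add (PosSemidef.one.smul (sub_nonneg.2 hα))

variable [Fintype ι]

theorem PosSemidef.mul_mul_same_of_isHermitian {M A : Matrix ι ι 𝕜} (hM : M.PosSemidef)
    (hA : A.IsHermitian) : (A * M * A).PosSemidef := by
  simpa only [hA.eq] using hM.conjTranspose_mul_mul_same A

theorem sub_smul_mul_self_sub_conjTranspose_mul_mul [DecidableEq ι] {A : Matrix ι ι 𝕜}
    (hA : A.IsHermitian) {t : 𝕜} (ht : star t = t) (α : 𝕜) :
    A - α • (A * A) - (1 - t • A)ᴴ * A * (1 - t • A) = A * ((2 * t - α) • 1 - t ^ 2 • A) * A := by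
  simp only [conjTranspose_sub, conjTranspose_one, conjTranspose_smul, hA.eq, ht, Matrix.mul_sub,
    Matrix.sub_mul, Matrix.mul_one, Matrix.one_mul, Matrix.smul_mul,
    Matrix.mul_smul, sub_smul, smul_sub, smul_smul]
  module

theorem dotProduct_conjTranspose_mul_mul_mulVec (V A : Matrix ι ι 𝕜) (x : ι → 𝕜) :
    star x ⬝ᵥ (Vᴴ * A * V) *ᵥ x = star (V *ᵥ x) ⬝ᵥ A *ᵥ (V *ᵥ x) := by
  simp only [star_mulVec, dotProduct_mulVec, vecMul_vecMul, Matrix.mul_assoc, ← mulVec_mulVec]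

theorem PosSemidef.re_dotProduct_mulVec_le {B C : Matrix ι ι 𝕜} (h : (B - C).PosSemidef)
    (x : ι → 𝕜) : RCLike.re (star x ⬝ᵥ C *ᵥ x) ≤ RCLike.re (star x ⬝ᵥ B *ᵥ x) := by
  have := h.re_dotProduct_nonneg x
  rwa [sub_mulVec, dotProduct_sub, map_sub, sub_nonneg] at this

end Matrix

theorem stmt_0_general {n : ℕ} (A : Matrix (Fin n) (Fin n) ℂ) (hA : A.PosDef)
    (c : ℝ)
    (hbound : ((c : ℂ) • (1 : Matrix (Fin n) (Fin n) ℂ) - A).PosSemidef)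
    (α : ℝ) (hα : α ≤ 1 / c)
    (V : Matrix (Fin n) (Fin n) ℂ)
    (hV : V = 1 - (c : ℂ)⁻¹ • A) :
    (A - (α : ℂ) • (A * A) - Vᴴ * A * V).PosSemidef ∧
    ∀ x : Fin n → ℂ,
      (star (V.mulVec x) ⬝ᵥ A.mulVec (V.mulVec x)).re ≤
        (star x ⬝ᵥ A.mulVec x).re - α * (star x ⬝ᵥ (A * A).mulVec x).re := by
  have hfactor := sub_smul_mul_self_sub_conjTranspose_mul_mul hA.isHermitian
    (t := (c : ℂ)⁻¹) (by simp) α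
  have hmiddle := posSemidef_smul_one_sub_inv_sq_smul (𝕜 := ℂ) hbound (one_div c ▸ hα)
  have hP : (A - (α : ℂ) • (A * A) - Vᴴ * A * V).PosSemidef := by
    rw [hV, hfactor]
    exact hmiddle.mul_mul_same_of_isHermitian hA.isHermitian
  refine ⟨hP, fun x => ?_⟩
  have h := hP.re_dotProduct_mulVec_le x
  rw [dotProduct_conjTranspose_mul_mul_mulVec, sub_mulVec, dotProduct_sub, smul_mulVec,
    dotProduct_smul] at h
  simpa [Complex.mul_re] using h

/-- For Hermitian positive definite `A` with spectral bound `c`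
(`A ≤ c I`), `V = I - A/c`, and `0 < α ≤ 1/c`, one has
`‖Vx‖²_A ≤ ‖x‖²_A - α‖x‖²_{A²}` for all `x`, i.e. `Vᴴ A V ≤ A - α A²`. -/
theorem stmt_0 {n : ℕ} (A : Matrix (Fin n) (Fin n) ℂ) (hA : A.PosDef)
    (c : ℝ) (hc : 0 < c)
    (hbound : ((c : ℂ) • (1 : Matrix (Fin n) (Fin n) ℂ) - A).PosSemidef)
    (α : ℝ) (hα0 : 0 < α) (hα : α ≤ 1 / c)
    (V : Matrix (Fin n) (Fin n) ℂ)
    (hV : V = 1 - (c : ℂ)⁻¹ • A) :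
    (A - (α : ℂ) • (A * A) - Vᴴ * A * V).PosSemidef ∧
    ∀ x : Fin n → ℂ,
      (star (V.mulVec x) ⬝ᵥ A.mulVec (V.mulVec x)).re ≤
        (star x ⬝ᵥ A.mulVec x).re - α * (star x ⬝ᵥ (A * A).mulVec x).re :=
  stmt_0_general A hA c hbound α hα V hV
end

section
/- Let Aₙ be Hermitian positive definite, Vpost an n×n matrix and p an n×k full-rank matrix with k < n. Assume (a) there exists α > 0 such that ‖Vpost x‖²_{Aₙ} ≤ ‖x‖²_{Aₙ} - α ‖x‖²_{Aₙ²} for all x, and (b) there exists γ > 0 such that min over y of ‖x - p y‖₂² ≤ γ ‖x‖²_{Aₙ} for all x. Then γ ≥ α and the two-grid iteration matrix TGM = Vpost (I - p (p^H Aₙ p)⁻¹ p^H Aₙ) satisfies ‖TGM‖_{Aₙ} ≤ √(1 - α/γ). -/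
open Matrix
open scoped ComplexOrder

/-!
Write `e` for the image of `x` under the coarse-grid correction `I - p (pᴴ A p)⁻¹ pᴴ A`.
It is the `A`-orthogonal projection of `x` onto the `A`-orthogonal complement of `range p`, so
`‖e‖_A ≤ ‖x‖_A`. For any `y`, `pᴴ A e = 0` gives `‖e‖²_A = ⟨A e, e - p y⟩ ≤ ‖A e‖₂ ‖e - p y‖₂`,
and the approximation property then yields `‖e‖²_A ≤ γ ‖e‖²_{A²}`. Feeding this into the smoothing
property gives `‖V e‖²_A ≤ (1 - α/γ) ‖e‖²_A ≤ (1 - α/γ) ‖x‖²_A`. Since `k < n`, the kernel of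
`pᴴ A` contains some `e ≠ 0`, and `0 ≤ ‖V e‖²_A ≤ (γ - α) ‖e‖²_{A²}` forces `α ≤ γ`.
-/

theorem Matrix.exists_ne_zero_mulVec_eq_zero_of_card_lt {K ι κ : Type*} [Field K]
    [Fintype ι] [Fintype κ] (M : Matrix κ ι K) (h : Fintype.card κ < Fintype.card ι) :
    ∃ v ≠ 0, M *ᵥ v = 0 := by
  have hker : LinearMap.ker M.mulVecLin ≠ ⊥ :=
    LinearMap.ker_ne_bot_of_finrank_lt (by simpa using h)
  obtain ⟨v, hv, hv0⟩ := (Submodule.ne_bot_iff _).mp hker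
  exact ⟨v, hv0, hv⟩

section

variable {ι κ : Type*} [Fintype ι] [Fintype κ]

theorem re_star_dotProduct_sq_le (u v : ι → ℂ) :
    (star u ⬝ᵥ v).re ^ 2 ≤ (star u ⬝ᵥ u).re * (star v ⬝ᵥ v).re := by
  have h := inner_mul_inner_self_le (𝕜 := ℂ) (WithLp.toLp 2 u) (WithLp.toLp 2 v)
  rw [norm_inner_symm (WithLp.toLp 2 v)] at h
  simp only [EuclideanSpace.inner_toLp_toLp, dotProduct_comm _ (star _)] at h
  calc (star u ⬝ᵥ v).re ^ 2 = |(star u ⬝ᵥ v).re| ^ 2 := (sq_abs _).symm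
    _ ≤ ‖star u ⬝ᵥ v‖ ^ 2 := pow_le_pow_left₀ (abs_nonneg _) (Complex.abs_re_le_norm _) 2
    _ ≤ _ := by rw [sq]; exact h

theorem Matrix.IsHermitian.star_mulVec_dotProduct {A : Matrix ι ι ℂ} (hA : A.IsHermitian)
    (u v : ι → ℂ) : star (A *ᵥ u) ⬝ᵥ v = star u ⬝ᵥ A *ᵥ v := by
  rw [star_mulVec, hA.eq, ← dotProduct_mulVec]

variable {A : Matrix ι ι ℂ} {p : Matrix ι κ ℂ} {e : ι → ℂ}

theorem star_mulVec_dotProduct_mulVec_eq_zero (he : (pᴴ * A) *ᵥ e = 0) (z : κ → ℂ) :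
    star (A *ᵥ e) ⬝ᵥ p *ᵥ z = 0 := by
  rw [dotProduct_mulVec, ← conjTranspose_conjTranspose p, ← star_mulVec, mulVec_mulVec, he,
    star_zero, zero_dotProduct]

theorem star_dotProduct_mulVec_add_of_mulVec_eq_zero (hA : A.IsHermitian)
    (he : (pᴴ * A) *ᵥ e = 0) (w : κ → ℂ) :
    star (e + p *ᵥ w) ⬝ᵥ A *ᵥ (e + p *ᵥ w) =
      star e ⬝ᵥ A *ᵥ e + star (p *ᵥ w) ⬝ᵥ A *ᵥ (p *ᵥ w) := by
  have hcross : star e ⬝ᵥ A *ᵥ (p *ᵥ w) = 0 := by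
    rw [← hA.star_mulVec_dotProduct, star_mulVec_dotProduct_mulVec_eq_zero he]
  have hcross' : star (p *ᵥ w) ⬝ᵥ A *ᵥ e = 0 := by
    rw [star_dotProduct, hA.star_mulVec_dotProduct, hcross, star_zero]
  rw [star_add, mulVec_add, add_dotProduct, dotProduct_add, dotProduct_add, hcross, hcross']
  ring

theorem re_star_dotProduct_mulVec_le_of_approx (hA : A.PosSemidef) {γ : ℝ} (hγ : 0 ≤ γ)
    (he : (pᴴ * A) *ᵥ e = 0) (y : κ → ℂ)
    (hy : (star (e - p *ᵥ y) ⬝ᵥ (e - p *ᵥ y)).re ≤ γ * (star e ⬝ᵥ A *ᵥ e).re) :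
    (star e ⬝ᵥ A *ᵥ e).re ≤ γ * (star e ⬝ᵥ (A * A) *ᵥ e).re := by
  have hq : star (A *ᵥ e) ⬝ᵥ (e - p *ᵥ y) = star e ⬝ᵥ A *ᵥ e := by
    rw [dotProduct_sub, star_mulVec_dotProduct_mulVec_eq_zero he, sub_zero,
      hA.isHermitian.star_mulVec_dotProduct]
  have hr : star (A *ᵥ e) ⬝ᵥ A *ᵥ e = star e ⬝ᵥ (A * A) *ᵥ e := by
    rw [hA.isHermitian.star_mulVec_dotProduct, mulVec_mulVec]
  have hcs := re_star_dotProduct_sq_le (A *ᵥ e) (e - p *ᵥ y)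
  rw [hq, hr] at hcs
  have hq0 : 0 ≤ (star e ⬝ᵥ A *ᵥ e).re := hA.re_dotProduct_nonneg e
  have hr0 : 0 ≤ (star e ⬝ᵥ (A * A) *ᵥ e).re := by
    rw [← hr]; exact (Complex.nonneg_iff.mp (dotProduct_star_self_nonneg _)).1
  rcases hq0.eq_or_lt with hq0 | hq0
  · rw [← hq0]; positivity
  · refine le_of_mul_le_mul_right ?_ hq0
    nlinarith [mul_le_mul_of_nonneg_left hy hr0]

variable [DecidableEq ι] [DecidableEq κ]

noncomputable def coarseGridCorrection (A : Matrix ι ι ℂ) (p : Matrix ι κ ℂ) : Matrix ι ι ℂ :=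
  1 - p * (pᴴ * A * p)⁻¹ * pᴴ * A

theorem conjTranspose_mul_mul_coarseGridCorrection (h : IsUnit (pᴴ * A * p)) :
    pᴴ * A * coarseGridCorrection A p = 0 := by
  have hinv : (pᴴ * A * p) * (pᴴ * A * p)⁻¹ = 1 :=
    mul_nonsing_inv _ ((isUnit_iff_isUnit_det _).mp h)
  have hproj : pᴴ * A * (p * (pᴴ * A * p)⁻¹ * pᴴ * A) =
      (pᴴ * A * p) * (pᴴ * A * p)⁻¹ * (pᴴ * A) := by
    simp only [Matrix.mul_assoc]
  rw [coarseGridCorrection, Matrix.mul_sub, Matrix.mul_one, hproj, hinv, Matrix.one_mul, sub_self]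

theorem coarseGridCorrection_mulVec_add (A : Matrix ι ι ℂ) (p : Matrix ι κ ℂ) (x : ι → ℂ) :
    coarseGridCorrection A p *ᵥ x + p *ᵥ (((pᴴ * A * p)⁻¹ * pᴴ * A) *ᵥ x) = x := by
  rw [coarseGridCorrection, sub_mulVec, one_mulVec, mulVec_mulVec, Matrix.mul_assoc p,
    Matrix.mul_assoc p]
  abel

theorem re_star_dotProduct_mulVec_coarseGridCorrection_le (hA : A.PosSemidef)
    (h : IsUnit (pᴴ * A * p)) (x : ι → ℂ) :
    (star (coarseGridCorrection A p *ᵥ x) ⬝ᵥ A *ᵥ (coarseGridCorrection A p *ᵥ x)).re ≤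
      (star x ⬝ᵥ A *ᵥ x).re := by
  have he : (pᴴ * A) *ᵥ (coarseGridCorrection A p *ᵥ x) = 0 := by
    rw [mulVec_mulVec, conjTranspose_mul_mul_coarseGridCorrection h, zero_mulVec]
  conv_rhs => rw [← coarseGridCorrection_mulVec_add A p x]
  rw [star_dotProduct_mulVec_add_of_mulVec_eq_zero hA.isHermitian he, Complex.add_re]
  exact le_add_of_nonneg_right (hA.re_dotProduct_nonneg _)

end

/-- Ruge–Stüben two-grid convergence theorem:
Under the smoothing property (a) and the approximation property (b),
`γ ≥ α` and the two-grid iteration matrix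
`TGM = Vpost (I - p (pᴴ A p)⁻¹ pᴴ A)` satisfies `‖TGM‖_A ≤ √(1 - α/γ)`,
expressed equivalently as `‖TGM x‖²_A ≤ (1 - α/γ) ‖x‖²_A` for all `x`. -/
theorem stmt_2 {n k : ℕ} (hkn : k < n)
    (A : Matrix (Fin n) (Fin n) ℂ) (hA : A.PosDef)
    (V : Matrix (Fin n) (Fin n) ℂ)
    (p : Matrix (Fin n) (Fin k) ℂ) (hp : Function.Injective p.mulVec)
    (α : ℝ) (hα : 0 < α)
    (ha : ∀ x : Fin n → ℂ,
      (star (V.mulVec x) ⬝ᵥ A.mulVec (V.mulVec x)).re ≤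
        (star x ⬝ᵥ A.mulVec x).re - α * (star x ⬝ᵥ (A * A).mulVec x).re)
    (γ : ℝ) (hγ : 0 < γ)
    (hb : ∀ x : Fin n → ℂ, ∃ y : Fin k → ℂ,
      (star (x - p.mulVec y) ⬝ᵥ (x - p.mulVec y)).re ≤
        γ * (star x ⬝ᵥ A.mulVec x).re)
    (TGM : Matrix (Fin n) (Fin n) ℂ)
    (hTGM : TGM = V * (1 - p * (pᴴ * A * p)⁻¹ * pᴴ * A)) :
    α ≤ γ ∧
    ∀ x : Fin n → ℂ,
      (star (TGM.mulVec x) ⬝ᵥ A.mulVec (TGM.mulVec x)).re ≤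
        (1 - α / γ) * (star x ⬝ᵥ A.mulVec x).re := by
  have happrox : ∀ e, (pᴴ * A) *ᵥ e = 0 →
      (star e ⬝ᵥ A *ᵥ e).re ≤ γ * (star e ⬝ᵥ (A * A) *ᵥ e).re := fun e he =>
    (hb e).elim fun y hy => re_star_dotProduct_mulVec_le_of_approx hA.posSemidef hγ.le he y hy
  have hαγ : α ≤ γ := by
    obtain ⟨e, he0, he⟩ := (pᴴ * A).exists_ne_zero_mulVec_eq_zero_of_card_lt (by simpa using hkn)
    have hr : 0 < (star e ⬝ᵥ (A * A) *ᵥ e).re := by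
      rw [← mulVec_mulVec, ← hA.isHermitian.star_mulVec_dotProduct]
      exact Complex.pos_iff.mp (dotProduct_star_self_pos_iff.mpr
        ((mulVec_injective_of_isUnit hA.isUnit).ne he0 |>.trans_eq (mulVec_zero A))) |>.1
    have hVe : 0 ≤ (star (V *ᵥ e) ⬝ᵥ A *ᵥ (V *ᵥ e)).re :=
      hA.posSemidef.re_dotProduct_nonneg _
    by_contra! hlt
    nlinarith [ha e, happrox e he, mul_pos (sub_pos.mpr hlt) hr]
  refine ⟨hαγ, fun x => ?_⟩
  set e := coarseGridCorrection A p *ᵥ x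
  have he : (pᴴ * A) *ᵥ e = 0 := by
    rw [mulVec_mulVec, conjTranspose_mul_mul_coarseGridCorrection
      (hA.conjTranspose_mul_mul_same hp).isUnit, zero_mulVec]
  have hTx : TGM *ᵥ x = V *ᵥ e := by rw [hTGM, ← mulVec_mulVec]; rfl
  rw [hTx]
  calc (star (V *ᵥ e) ⬝ᵥ A *ᵥ (V *ᵥ e)).re
      ≤ (star e ⬝ᵥ A *ᵥ e).re - α * (star e ⬝ᵥ (A * A) *ᵥ e).re := ha e
    _ ≤ (1 - α / γ) * (star e ⬝ᵥ A *ᵥ e).re := by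
        have := mul_le_mul_of_nonneg_left (happrox e he) (div_nonneg hα.le hγ.le)
        rw [← mul_assoc, div_mul_cancel₀ α hγ.ne'] at this
        linarith
    _ ≤ (1 - α / γ) * (star x ⬝ᵥ A *ᵥ x).re :=
        mul_le_mul_of_nonneg_left
          (re_star_dotProduct_mulVec_coarseGridCorrection_le hA.posSemidef
            (hA.conjTranspose_mul_mul_same hp).isUnit x)
          (sub_nonneg.mpr ((div_le_one hγ).mpr hαγ))
end

section
/- Let f, p be d×d matrix-valued trigonometric polynomials, n = 2k even, and define the block-circulant matrices 𝒜ₙ(g) = (Fₙ ⊗ I_d) diag_{i}(g(θ_i^{(n)})) (Fₙ^H ⊗ I_d) for θ_i^{(n)} = 2πi/n. With pₙᵏ := 𝒜ₙ(p)(Kₙ^T ⊗ I_d), where Kₙ is the even-index cutting matrix, the coarse matrix (pₙᵏ)^H 𝒜ₙ(f) pₙᵏ equals 𝒜_k(f̂) where f̂(θ) = ½ ( p(θ/2)^H f(θ/2) p(θ/2) + p(θ/2 + π)^H f(θ/2 + π) p(θ/2 + π) ). Moreover if f(θ) is positive semidefinite for all θ then so is f̂(θ). -/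
open Matrix
open scoped ComplexOrder Kronecker

/-- The (unitary) Fourier matrix `Fₙ` with entries `n^{-1/2} e^{-ι j θ_i^{(n)}}`,
`θ_i^{(n)} = 2πi/n`. -/
noncomputable def Fmat (n : ℕ) : Matrix (Fin n) (Fin n) ℂ :=
  Matrix.of fun i j =>
    ((Real.sqrt n : ℝ) : ℂ)⁻¹ *
      Complex.exp (-Complex.I * ((j : ℕ) : ℂ) *
        ((2 * Real.pi * (i : ℕ) / n : ℝ) : ℂ))

/-- Block-diagonal matrix of the samples `g(θ_i^{(n)})`, `θ_i^{(n)} = 2πi/n`. -/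
noncomputable def sampDiag (n d : ℕ) (g : ℝ → Matrix (Fin d) (Fin d) ℂ) :
    Matrix (Fin n × Fin d) (Fin n × Fin d) ℂ :=
  Matrix.of fun p q =>
    if p.1 = q.1 then g (2 * Real.pi * (p.1 : ℕ) / n) p.2 q.2 else 0

/-- The block-circulant matrix `𝒜ₙ(g) = (Fₙ ⊗ I_d) diag_i(g(θ_i^{(n)})) (Fₙᴴ ⊗ I_d)`. -/
noncomputable def blockCirc (n d : ℕ) (g : ℝ → Matrix (Fin d) (Fin d) ℂ) :
    Matrix (Fin n × Fin d) (Fin n × Fin d) ℂ :=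
  (Fmat n ⊗ₖ (1 : Matrix (Fin d) (Fin d) ℂ)) * sampDiag n d g *
    ((Fmat n)ᴴ ⊗ₖ (1 : Matrix (Fin d) (Fin d) ℂ))

/-- The cutting matrix `Kₙ` (with `n = 2k`) selecting the even-indexed entries. -/
def cutK (k : ℕ) : Matrix (Fin k) (Fin (2 * k)) ℂ :=
  Matrix.of fun i j => if (j : ℕ) = 2 * (i : ℕ) then 1 else 0

/-!
Since `Fₙ` is unitary, `g ↦ 𝒜ₙ(g)` is multiplicative and commutes with `ᴴ`, so
`Pᴴ 𝒜ₙ(f) P = (Kₙ ⊗ I) 𝒜ₙ(pᴴ f p) (Kₙᵀ ⊗ I)`. Entrywise, `𝒜ₙ(g)` at blocks `(i, j)` is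
`n⁻¹ ∑_{l<n} e^{2πı(j-i)l/n} g(2πl/n)`; keeping only the rows and columns `2i, 2j` of the
`2k`-point sum and pairing `l` with `l + k` (same phase, angles `θ/2` and `θ/2 + π`)
gives the `k`-point sum of `½(g(θ/2) + g(θ/2 + π))`. Positivity of `f̂` follows because
each `pᴴ f p` is a congruence of `f`.
-/

open Finset Complex
open scoped Real

lemma Fmat_mul_star_Fmat {n : ℕ} (i j l : Fin n) :
    Fmat n i l * star (Fmat n j l) =
      (n : ℂ)⁻¹ * cexp (2 * π * I * (((j : ℕ) : ℂ) - (i : ℕ)) * (l : ℕ) / n) := by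
  have hsqrt : ((√n : ℝ) : ℂ)⁻¹ * starRingEnd ℂ ((√n : ℝ) : ℂ)⁻¹ = (n : ℂ)⁻¹ := by
    rw [map_inv₀, Complex.conj_ofReal, ← mul_inv, ← Complex.ofReal_mul,
      Real.mul_self_sqrt n.cast_nonneg, Complex.ofReal_natCast]
  simp only [Fmat, of_apply, star_mul', Complex.star_def, ← Complex.exp_conj]
  rw [mul_mul_mul_comm, hsqrt, ← Complex.exp_add]
  congr 2
  simp only [map_mul, map_neg, Complex.conj_I, Complex.conj_ofReal, Complex.conj_natCast]
  push_cast
  ring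

lemma sum_range_exp_eq_zero_of_not_dvd {n : ℕ} {m : ℤ} (hm : ¬ (n : ℤ) ∣ m) :
    ∑ l ∈ range n, cexp (2 * π * I * m * l / n) = 0 := by
  rcases n.eq_zero_or_pos with rfl | hpos
  · simp
  have hn : (n : ℂ) ≠ 0 := by exact_mod_cast hpos.ne'
  set ζ := cexp (2 * π * I * m / n)
  have hpow : ∀ l : ℕ, ζ ^ l = cexp (2 * π * I * m * l / n) := fun l => by
    rw [← Complex.exp_nat_mul]; ring_nf
  have hζ : ζ ≠ 1 := by
    rw [Ne, Complex.exp_eq_one_iff]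
    rintro ⟨t, ht⟩
    refine hm ⟨t, ?_⟩
    have : (m : ℂ) = n * t := by
      field_simp at ht
      linear_combination ht
    exact_mod_cast this
  have hζn : ζ ^ n = 1 := by
    rw [hpow, mul_div_assoc, div_self hn, mul_one, mul_comm]
    exact Complex.exp_int_mul_two_pi_mul_I m
  simp_rw [← hpow]
  rw [geom_sum_eq hζ, hζn, sub_self, zero_div]

lemma Fmat_mul_conjTranspose (n : ℕ) : Fmat n * (Fmat n)ᴴ = 1 := by
  ext i j
  have hn : (n : ℂ) ≠ 0 := by exact_mod_cast i.pos.ne'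
  simp only [mul_apply, conjTranspose_apply, Fmat_mul_star_Fmat, ← mul_sum]
  rw [Fin.sum_univ_eq_sum_range (fun l => cexp (2 * π * I * (((j : ℕ) : ℂ) - (i : ℕ)) * l / n))]
  by_cases hij : i = j
  · subst hij
    simp [hn]
  · have hndvd : ¬ (n : ℤ) ∣ ((j : ℕ) - (i : ℕ) : ℤ) := fun h => hij <| Fin.ext <| by
      have := Int.eq_zero_of_abs_lt_dvd h (by rw [abs_lt]; omega)
      omega
    have hsum := sum_range_exp_eq_zero_of_not_dvd hndvd
    push_cast at hsum
    rw [hsum, mul_zero, one_apply_ne hij]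

lemma Fmat_conjTranspose_mul (n : ℕ) : (Fmat n)ᴴ * Fmat n = 1 :=
  mul_eq_one_comm.mp (Fmat_mul_conjTranspose n)

lemma sampDiag_eq_blockDiagonal (n d : ℕ) (g : ℝ → Matrix (Fin d) (Fin d) ℂ) :
    sampDiag n d g = (blockDiagonal fun i : Fin n => g (2 * π * (i : ℕ) / n)).submatrix
      (Equiv.prodComm _ _) (Equiv.prodComm _ _) := by
  ext ⟨i, a⟩ ⟨j, b⟩
  simp [sampDiag, blockDiagonal_apply]

lemma sampDiag_mul (n d : ℕ) (g h : ℝ → Matrix (Fin d) (Fin d) ℂ) :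
    sampDiag n d g * sampDiag n d h = sampDiag n d (fun θ => g θ * h θ) := by
  simp only [sampDiag_eq_blockDiagonal, submatrix_mul_equiv, blockDiagonal_mul]

lemma sampDiag_conjTranspose (n d : ℕ) (g : ℝ → Matrix (Fin d) (Fin d) ℂ) :
    (sampDiag n d g)ᴴ = sampDiag n d (fun θ => (g θ)ᴴ) := by
  simp only [sampDiag_eq_blockDiagonal, conjTranspose_submatrix, blockDiagonal_conjTranspose]

lemma blockCirc_mul (n d : ℕ) (g h : ℝ → Matrix (Fin d) (Fin d) ℂ) :
    blockCirc n d g * blockCirc n d h = blockCirc n d (fun θ => g θ * h θ) := by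
  have hunitary : ((Fmat n)ᴴ ⊗ₖ (1 : Matrix (Fin d) (Fin d) ℂ)) * (Fmat n ⊗ₖ 1) = 1 := by
    rw [← mul_kronecker_mul, Fmat_conjTranspose_mul, one_mul, one_kronecker_one]
  simp only [blockCirc, Matrix.mul_assoc]
  rw [← Matrix.mul_assoc ((Fmat n)ᴴ ⊗ₖ 1), hunitary, Matrix.one_mul,
    ← Matrix.mul_assoc (sampDiag n d g), sampDiag_mul]

lemma blockCirc_conjTranspose (n d : ℕ) (g : ℝ → Matrix (Fin d) (Fin d) ℂ) :
    (blockCirc n d g)ᴴ = blockCirc n d (fun θ => (g θ)ᴴ) := by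
  simp only [blockCirc, conjTranspose_mul, conjTranspose_kronecker, conjTranspose_one,
    conjTranspose_conjTranspose, sampDiag_conjTranspose, Matrix.mul_assoc]

lemma blockCirc_apply {n d : ℕ} (g : ℝ → Matrix (Fin d) (Fin d) ℂ) (i j : Fin n) (a b : Fin d) :
    blockCirc n d g (i, a) (j, b) = (n : ℂ)⁻¹ * ∑ l ∈ range n,
      cexp (2 * π * I * (((j : ℕ) : ℂ) - (i : ℕ)) * l / n) * g (2 * π * l / n) a b := by
  have hentry : blockCirc n d g (i, a) (j, b) =
      ∑ l : Fin n, Fmat n i l * star (Fmat n j l) * g (2 * π * (l : ℕ) / n) a b := by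
    simp only [blockCirc, sampDiag, mul_apply, Fintype.sum_prod_type, kroneckerMap_apply,
      of_apply, one_apply, conjTranspose_apply, mul_ite, ite_mul, mul_zero, zero_mul, mul_one,
      sum_ite_irrel, sum_const_zero, sum_ite_eq, sum_ite_eq', mem_univ, if_true]
    exact sum_congr rfl fun l _ => by ring
  rw [hentry, mul_sum, ← Fin.sum_univ_eq_sum_range (fun l => (n : ℂ)⁻¹ *
    (cexp (2 * π * I * (((j : ℕ) : ℂ) - (i : ℕ)) * l / n) * g (2 * π * l / n) a b))]
  simp only [Fmat_mul_star_Fmat, mul_assoc]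

lemma cutK_kronecker_mul_mul_apply {k : ℕ} {ι : Type*} [Fintype ι] [DecidableEq ι]
    (M : Matrix (Fin (2 * k) × ι) (Fin (2 * k) × ι) ℂ) (i j : Fin k) (a b : ι) :
    ((cutK k ⊗ₖ (1 : Matrix ι ι ℂ)) * M * ((cutK k)ᵀ ⊗ₖ (1 : Matrix ι ι ℂ))) (i, a) (j, b) =
      M (⟨2 * i, by omega⟩, a) (⟨2 * j, by omega⟩, b) := by
  have hcut : ∀ (r : Fin k) (s : Fin (2 * k)), ((s : ℕ) = 2 * r) = (s = ⟨2 * r, by omega⟩) :=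
    fun r s => by rw [Fin.ext_iff]
  simp only [mul_apply, Fintype.sum_prod_type, kroneckerMap_apply, cutK, of_apply,
    transpose_apply, one_apply, hcut, mul_ite, ite_mul, mul_zero, zero_mul, mul_one, one_mul,
    sum_ite_eq, sum_ite_eq', mem_univ, if_true]

lemma cutK_blockCirc_cutK_transpose (k d : ℕ) (g : ℝ → Matrix (Fin d) (Fin d) ℂ) :
    (cutK k ⊗ₖ (1 : Matrix (Fin d) (Fin d) ℂ)) * blockCirc (2 * k) d g *
      ((cutK k)ᵀ ⊗ₖ (1 : Matrix (Fin d) (Fin d) ℂ)) =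
      blockCirc k d (fun θ => (1 / 2 : ℂ) • (g (θ / 2) + g (θ / 2 + π))) := by
  ext ⟨i, a⟩ ⟨j, b⟩
  have hk : (k : ℂ) ≠ 0 := by exact_mod_cast i.pos.ne'
  have hk' : (k : ℝ) ≠ 0 := by exact_mod_cast i.pos.ne'
  rw [cutK_kronecker_mul_mul_apply, blockCirc_apply, blockCirc_apply, Fin.val_mk, Fin.val_mk,
    show range (2 * k) = range (k + k) by rw [two_mul], sum_range_add, ← sum_add_distrib,
    mul_sum, mul_sum]
  refine sum_congr rfl fun m _ => ?_
  set ω := cexp (2 * π * I * (((j : ℕ) : ℂ) - (i : ℕ)) * m / k)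
  have hω : cexp (2 * π * I * (((2 * j : ℕ) : ℂ) - (2 * i : ℕ)) * m / (2 * k : ℕ)) = ω := by
    congr 1; push_cast; field_simp
  have hω_shift :
      cexp (2 * π * I * (((2 * j : ℕ) : ℂ) - (2 * i : ℕ)) * (k + m : ℕ) / (2 * k : ℕ)) = ω := by
    have : 2 * π * I * (((2 * j : ℕ) : ℂ) - (2 * i : ℕ)) * (k + m : ℕ) / (2 * k : ℕ) =
        2 * π * I * (((j : ℕ) : ℂ) - (i : ℕ)) * m / k +
          (((j : ℕ) - (i : ℕ) : ℤ) : ℂ) * (2 * π * I) := by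
      push_cast; field_simp; ring
    rw [this, Complex.exp_add, Complex.exp_int_mul_two_pi_mul_I, mul_one]
  have hθ : 2 * π * (m : ℕ) / (2 * k : ℕ) = 2 * π * m / k / 2 := by
    push_cast; field_simp
  have hθ_shift : 2 * π * (k + m : ℕ) / (2 * k : ℕ) = 2 * π * m / k / 2 + π := by
    push_cast; field_simp; ring
  rw [hω, hω_shift, hθ, hθ_shift, Matrix.smul_apply, Matrix.add_apply, smul_eq_mul]
  push_cast
  field_simp

lemma conjTranspose_transpose_cutK (k : ℕ) : ((cutK k)ᵀ)ᴴ = cutK k := by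
  ext i j
  simp [cutK, apply_ite (star : ℂ → ℂ)]

theorem stmt_11_general {d k : ℕ}
    (f p : ℝ → Matrix (Fin d) (Fin d) ℂ)
    (fhat : ℝ → Matrix (Fin d) (Fin d) ℂ)
    (hfhat : ∀ θ : ℝ, fhat θ = (1 / 2 : ℂ) •
      ((p (θ / 2))ᴴ * f (θ / 2) * p (θ / 2) +
        (p (θ / 2 + Real.pi))ᴴ * f (θ / 2 + Real.pi) * p (θ / 2 + Real.pi)))
    (P : Matrix (Fin (2 * k) × Fin d) (Fin k × Fin d) ℂ)
    (hP : P = blockCirc (2 * k) d p *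
      ((cutK k)ᵀ ⊗ₖ (1 : Matrix (Fin d) (Fin d) ℂ))) :
    Pᴴ * blockCirc (2 * k) d f * P = blockCirc k d fhat ∧
    ((∀ θ : ℝ, (f θ).PosSemidef) → ∀ θ : ℝ, (fhat θ).PosSemidef) := by
  refine ⟨?_, fun hf θ => ?_⟩
  · calc Pᴴ * blockCirc (2 * k) d f * P
        = (cutK k ⊗ₖ (1 : Matrix (Fin d) (Fin d) ℂ)) *
            blockCirc (2 * k) d (fun θ => (p θ)ᴴ * f θ * p θ) *
            ((cutK k)ᵀ ⊗ₖ (1 : Matrix (Fin d) (Fin d) ℂ)) := by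
          rw [hP, conjTranspose_mul, conjTranspose_kronecker, conjTranspose_one,
            conjTranspose_transpose_cutK, blockCirc_conjTranspose, ← blockCirc_mul,
            ← blockCirc_mul]
          simp only [Matrix.mul_assoc]
      _ = blockCirc k d fhat := by rw [cutK_blockCirc_cutK_transpose, funext hfhat]
  · rw [hfhat θ]
    exact (((hf _).conjTranspose_mul_mul_same _).add
      ((hf _).conjTranspose_mul_mul_same _)).smul (by norm_num [Complex.le_def])

/-- with `pₙᵏ = 𝒜ₙ(p)(Kₙᵀ ⊗ I_d)` and `n = 2k`, the coarse matrix
`(pₙᵏ)ᴴ 𝒜ₙ(f) pₙᵏ` equals `𝒜_k(f̂)` with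
`f̂(θ) = ½(p(θ/2)ᴴ f(θ/2) p(θ/2) + p(θ/2+π)ᴴ f(θ/2+π) p(θ/2+π))`;
moreover, if `f(θ) ⪰ 0` for all `θ` then `f̂(θ) ⪰ 0` for all `θ`. -/
theorem stmt_11 {d k : ℕ} (hk : 0 < k)
    (f p : ℝ → Matrix (Fin d) (Fin d) ℂ)
    (fhat : ℝ → Matrix (Fin d) (Fin d) ℂ)
    (hfhat : ∀ θ : ℝ, fhat θ = (1 / 2 : ℂ) •
      ((p (θ / 2))ᴴ * f (θ / 2) * p (θ / 2) +
        (p (θ / 2 + Real.pi))ᴴ * f (θ / 2 + Real.pi) * p (θ / 2 + Real.pi)))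
    (P : Matrix (Fin (2 * k) × Fin d) (Fin k × Fin d) ℂ)
    (hP : P = blockCirc (2 * k) d p *
      ((cutK k)ᵀ ⊗ₖ (1 : Matrix (Fin d) (Fin d) ℂ))) :
    Pᴴ * blockCirc (2 * k) d f * P = blockCirc k d fhat ∧
    ((∀ θ : ℝ, (f θ).PosSemidef) → ∀ θ : ℝ, (fhat θ).PosSemidef) :=
  stmt_11_general f p fhat hfhat P hP
end

section
/- Let f(θ) = a₀ + a₁ e^{ιθ} + a₁ᵀ e^{−ιθ} with a₀ = (1/3)[[16, −8],[−8, 14]] and a₁ = (1/3)[[0, −8],[0, 1]] (the Q₂ Lagrangian FEM symbol). Then the eigenvalues of the Hermitian matrix f(θ) are λ_{1,2}(θ) = 5 + (1/3)cos θ ∓ (1/3)√(129 + 126 cos θ + cos²θ); in particular λ_min(f(θ)) vanishes (only) at θ = 0 with a zero of order two, and ‖f‖_∞ = max_θ ‖f(θ)‖_∞(row-sum) = 32/3. -/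
open Matrix

/-- Zeroth Fourier coefficient of the `ℚ₂` Lagrangian FEM symbol. -/
noncomputable def a0 : Matrix (Fin 2) (Fin 2) ℂ := (1 / 3 : ℂ) • !![16, -8; -8, 14]

/-- First Fourier coefficient of the `ℚ₂` Lagrangian FEM symbol. -/
noncomputable def a1 : Matrix (Fin 2) (Fin 2) ℂ := (1 / 3 : ℂ) • !![0, -8; 0, 1]

/-- The `ℚ₂` Lagrangian FEM symbol `f(θ) = a₀ + a₁ e^{ιθ} + a₁ᵀ e^{−ιθ}`. -/
noncomputable def fQ2 (θ : ℝ) : Matrix (Fin 2) (Fin 2) ℂ :=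
  a0 + Complex.exp (Complex.I * (θ : ℂ)) • a1 +
    Complex.exp (-Complex.I * (θ : ℂ)) • a1ᵀ

/-- Minimal eigenvalue function of `fQ2`. -/
noncomputable def lminQ2 (θ : ℝ) : ℝ :=
  5 + Real.cos θ / 3 -
    Real.sqrt (129 + 126 * Real.cos θ + Real.cos θ ^ 2) / 3

/-- Maximal eigenvalue function of `fQ2`. -/
noncomputable def lmaxQ2 (θ : ℝ) : ℝ :=
  5 + Real.cos θ / 3 +
    Real.sqrt (129 + 126 * Real.cos θ + Real.cos θ ^ 2) / 3

/-!
The characteristic polynomial of `fQ2 θ` is `μ² - (10 + 2 cos θ / 3) μ + 32 (1 - cos θ) / 3`, so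
its roots are `λ_min` and `λ_max`. As `λ_max > 0`, the identity `λ_min λ_max = 32 (1 - cos θ) / 3`
shows that `λ_min` vanishes exactly where `cos θ = 1`. Differentiating gives
`λ_min' θ = sin θ · q θ` with `q 0 = 1` (`q = derivFactorQ2`), hence `λ_min' 0 = 0` and
`λ_min'' 0 = q 0 = 1`.
The row sums are bounded entrywise using `|e^{±iθ}| = 1`, with equality at `θ = 0`.
-/

open Real

lemma Matrix.spectrum_fin_two_eq_pair {K : Type*} [Field K] (A : Matrix (Fin 2) (Fin 2) K)
    {a b : K} (htrace : A.trace = a + b) (hdet : A.det = a * b) : spectrum K A = {a, b} := by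
  ext μ
  have hfactor : μ ^ 2 - (a + b) * μ + a * b = (μ - a) * (μ - b) := by ring
  simp only [mem_spectrum_iff_isRoot_charpoly, charpoly_fin_two, htrace, hdet, Polynomial.IsRoot,
    Polynomial.eval_add, Polynomial.eval_sub, Polynomial.eval_mul, Polynomial.eval_pow,
    Polynomial.eval_X, Polynomial.eval_C, hfactor, mul_eq_zero, sub_eq_zero, Set.mem_insert_iff,
    Set.mem_singleton_iff]

open Complex in
lemma Complex.exp_I_mul_add_exp_neg_I_mul (z : ℂ) : exp (I * z) + exp (-I * z) = 2 * cos z := by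
  rw [two_cos]; ring_nf

open Complex in
lemma fQ2_eq (θ : ℝ) : fQ2 θ =
    !![16 / 3, -8 / 3 * (1 + exp (I * θ));
       -8 / 3 * (1 + exp (-I * θ)), ((14 + 2 * Real.cos θ) / 3 : ℝ)] := by
  ext i j
  fin_cases i <;> fin_cases j <;> simp [fQ2, a0, a1, ← exp_I_mul_add_exp_neg_I_mul] <;> ring

noncomputable def discQ2 (θ : ℝ) : ℝ := 129 + 126 * cos θ + cos θ ^ 2

lemma four_le_discQ2 (θ : ℝ) : 4 ≤ discQ2 θ := by
  have : 0 ≤ (cos θ + 1) * (cos θ + 125) := by nlinarith [neg_one_le_cos θ]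
  unfold discQ2; nlinarith

lemma lminQ2_eq (θ : ℝ) : lminQ2 θ = 5 + cos θ / 3 - √(discQ2 θ) / 3 := rfl

lemma lmaxQ2_eq (θ : ℝ) : lmaxQ2 θ = 5 + cos θ / 3 + √(discQ2 θ) / 3 := rfl

lemma lminQ2_add_lmaxQ2 (θ : ℝ) : lminQ2 θ + lmaxQ2 θ = 10 + 2 * cos θ / 3 := by
  rw [lminQ2_eq, lmaxQ2_eq]; ring

lemma lminQ2_mul_lmaxQ2 (θ : ℝ) : lminQ2 θ * lmaxQ2 θ = 32 * (1 - cos θ) / 3 := by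
  have hsq := sq_sqrt (by linarith [four_le_discQ2 θ] : 0 ≤ discQ2 θ)
  rw [lminQ2_eq, lmaxQ2_eq]
  unfold discQ2 at hsq ⊢
  linear_combination (-1 / 9 : ℝ) * hsq

lemma lmaxQ2_pos (θ : ℝ) : 0 < lmaxQ2 θ := by
  rw [lmaxQ2_eq]; linarith [neg_one_le_cos θ, sqrt_nonneg (discQ2 θ)]

lemma trace_fQ2 (θ : ℝ) : (fQ2 θ).trace = 10 + 2 * Real.cos θ / 3 := by
  rw [trace_fin_two, fQ2_eq]
  simp only [of_apply, cons_val', cons_val_zero, cons_val_one, cons_val_fin_one]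
  push_cast
  ring

open Complex in
lemma det_fQ2 (θ : ℝ) : (fQ2 θ).det = 32 * (1 - Real.cos θ) / 3 := by
  have hinv : exp (I * θ) * exp (-I * θ) = 1 := by
    rw [← Complex.exp_add]; simp
  rw [det_fin_two, fQ2_eq]
  simp only [of_apply, cons_val', cons_val_zero, cons_val_one, empty_val', cons_val_fin_one]
  push_cast
  linear_combination (-64 / 9 : ℂ) * hinv + (-64 / 9 : ℂ) * exp_I_mul_add_exp_neg_I_mul θ

lemma spectrum_fQ2 (θ : ℝ) : spectrum ℂ (fQ2 θ) = {(lminQ2 θ : ℂ), (lmaxQ2 θ : ℂ)} := by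
  apply spectrum_fin_two_eq_pair
  · rw [trace_fQ2, ← Complex.ofReal_add, lminQ2_add_lmaxQ2]; push_cast; ring
  · rw [det_fQ2, ← Complex.ofReal_mul, lminQ2_mul_lmaxQ2]; push_cast; ring

lemma lminQ2_eq_zero_iff (θ : ℝ) : lminQ2 θ = 0 ↔ cos θ = 1 := by
  have hprod := lminQ2_mul_lmaxQ2 θ
  have hmax := (lmaxQ2_pos θ).ne'
  constructor
  · intro h; rw [h, zero_mul] at hprod; linarith
  · intro h; rw [h] at hprod
    simpa [hmax] using hprod

noncomputable def derivFactorQ2 (θ : ℝ) : ℝ := ((63 + cos θ) / √(discQ2 θ) - 1) / 3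

lemma hasDerivAt_lminQ2 (θ : ℝ) : HasDerivAt lminQ2 (sin θ * derivFactorQ2 θ) θ := by
  have hdisc : HasDerivAt discQ2 (-2 * sin θ * (63 + cos θ)) θ := by
    have := (((hasDerivAt_cos θ).const_mul 126).const_add 129).add ((hasDerivAt_cos θ).pow 2)
    exact this.congr_deriv (by ring)
  have hdisc_pos : 0 < discQ2 θ := by linarith [four_le_discQ2 θ]
  have hsqrt_pos : 0 < √(discQ2 θ) := sqrt_pos.2 hdisc_pos
  have := (((hasDerivAt_cos θ).div_const 3).const_add 5).sub
    ((hdisc.sqrt hdisc_pos.ne').div_const 3)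
  exact this.congr_deriv (by unfold derivFactorQ2; field_simp; ring)

lemma deriv_lminQ2 : deriv lminQ2 = fun θ => sin θ * derivFactorQ2 θ :=
  funext fun θ => (hasDerivAt_lminQ2 θ).deriv

lemma differentiableAt_derivFactorQ2 (θ : ℝ) : DifferentiableAt ℝ derivFactorQ2 θ := by
  have hdisc : DifferentiableAt ℝ discQ2 θ := by unfold discQ2; fun_prop
  have hpos : 0 < discQ2 θ := by linarith [four_le_discQ2 θ]
  exact (((differentiableAt_cos.const_add 63).div (hdisc.sqrt hpos.ne')
    (sqrt_pos.2 hpos).ne').sub_const 1).div_const 3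

lemma derivFactorQ2_zero : derivFactorQ2 0 = 1 := by
  have hdisc : discQ2 0 = 16 ^ 2 := by norm_num [discQ2]
  rw [derivFactorQ2, hdisc, sqrt_sq (by norm_num)]
  norm_num

lemma iteratedDeriv_two_lminQ2_zero : iteratedDeriv 2 lminQ2 0 = 1 := by
  have hprod : HasDerivAt (fun θ => sin θ * derivFactorQ2 θ)
      (cos 0 * derivFactorQ2 0 + sin 0 * deriv derivFactorQ2 0) 0 :=
    (hasDerivAt_sin 0).mul (differentiableAt_derivFactorQ2 0).hasDerivAt
  rw [iteratedDeriv_succ, iteratedDeriv_one, deriv_lminQ2, hprod.deriv, derivFactorQ2_zero]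
  simp

lemma norm_one_add_le_two {z : ℂ} (hz : ‖z‖ = 1) : ‖1 + z‖ ≤ 2 :=
  (norm_add_le 1 z).trans (by rw [norm_one, hz]; norm_num)

open Complex in
lemma maxRowSum_fQ2_le (θ : ℝ) :
    max (‖fQ2 θ 0 0‖ + ‖fQ2 θ 0 1‖) (‖fQ2 θ 1 0‖ + ‖fQ2 θ 1 1‖) ≤ 32 / 3 := by
  have h01 : ‖fQ2 θ 0 1‖ ≤ 16 / 3 := by
    have := norm_one_add_le_two (norm_exp_I_mul_ofReal θ)
    simp only [fQ2_eq, of_apply, cons_val', cons_val_zero, cons_val_one, cons_val_fin_one,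
      Complex.norm_mul, Complex.norm_div, norm_neg, Complex.norm_ofNat]
    linarith
  have h10 : ‖fQ2 θ 1 0‖ ≤ 16 / 3 := by
    have := norm_one_add_le_two (norm_exp_I_mul_ofReal (-θ))
    rw [ofReal_neg, mul_neg, ← neg_mul] at this
    simp only [fQ2_eq, of_apply, cons_val', cons_val_zero, cons_val_one, cons_val_fin_one,
      Complex.norm_mul, Complex.norm_div, norm_neg, Complex.norm_ofNat]
    linarith
  have h00 : ‖fQ2 θ 0 0‖ = 16 / 3 := by simp [fQ2_eq]
  have h11 : ‖fQ2 θ 1 1‖ ≤ 16 / 3 := by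
    have hentry : fQ2 θ 1 1 = ((14 + 2 * Real.cos θ) / 3 : ℝ) := by rw [fQ2_eq]; rfl
    rw [hentry, Complex.norm_real, Real.norm_eq_abs, abs_le]
    constructor <;> linarith [Real.neg_one_le_cos θ, Real.cos_le_one θ]
  exact max_le (by linarith) (by linarith)

lemma fQ2_zero : fQ2 0 = !![16 / 3, -16 / 3; -16 / 3, 16 / 3] := by
  rw [fQ2_eq]; ext i j; fin_cases i <;> fin_cases j <;> norm_num

lemma maxRowSum_fQ2_zero :
    max (‖fQ2 0 0 0‖ + ‖fQ2 0 0 1‖) (‖fQ2 0 1 0‖ + ‖fQ2 0 1 1‖) = 32 / 3 := by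
  norm_num [fQ2_zero]

/-- the eigenvalues of the Hermitian matrix `fQ2(θ)` are
`λ_{1,2}(θ) = 5 + cosθ/3 ∓ √(129 + 126cosθ + cos²θ)/3`; `λ_min` vanishes only at
`θ = 0` (on `(−π, π]`) with a zero of order two; and the maximum over `θ` of the
maximum row sum of moduli of `f(θ)` equals `32/3`. -/
theorem stmt_18 :
    (∀ θ : ℝ, spectrum ℂ (fQ2 θ) = {(lminQ2 θ : ℂ), (lmaxQ2 θ : ℂ)}) ∧
    lminQ2 0 = 0 ∧
    (∀ θ ∈ Set.Ioc (-Real.pi) Real.pi, lminQ2 θ = 0 → θ = 0) ∧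
    deriv lminQ2 0 = 0 ∧ 0 < iteratedDeriv 2 lminQ2 0 ∧
    (∀ θ : ℝ,
      max (‖fQ2 θ 0 0‖ + ‖fQ2 θ 0 1‖)
          (‖fQ2 θ 1 0‖ + ‖fQ2 θ 1 1‖) ≤ 32 / 3) ∧
    max (‖fQ2 0 0 0‖ + ‖fQ2 0 0 1‖)
        (‖fQ2 0 1 0‖ + ‖fQ2 0 1 1‖) = 32 / 3 := by
  refine ⟨spectrum_fQ2, (lminQ2_eq_zero_iff 0).2 cos_zero, ?_, by simp [deriv_lminQ2],
    by rw [iteratedDeriv_two_lminQ2_zero]; exact one_pos, maxRowSum_fQ2_le, maxRowSum_fQ2_zero⟩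
  rintro θ ⟨hlo, hhi⟩ hzero
  exact (cos_eq_one_iff_of_lt_of_lt (by linarith [pi_pos]) (by linarith [pi_pos])).1
    ((lminQ2_eq_zero_iff θ).1 hzero)
end
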